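/- The uniform morphism φ on {1,2,3} with φ(1)=1221, φ(2)=2332, φ(3)=3113 is cubefree: the image of every cubefree word is cubefree. -/

import Mathlib

/-- A square: a word of the form `x ++ x` with `x` nonempty. -/
def IsSq {α : Type*} (w : List α) : Prop := ∃ x : List α, x ≠ [] ∧ w = x ++ x

/-- A cube: a word of the form `x ++ x ++ x` with `x` nonempty. -/
def IsCube {α : Type*} (w : List α) : Prop := ∃ x : List α, x ≠ [] ∧ w = x ++ x ++ x

/-- A weak square: a word of the form `a ++ x ++ x ++ a` with `a` a letter. -/
def IsWeakSq {α : Type*} (w : List α) : Prop :=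
  ∃ (a : α) (x : List α), w = a :: (x ++ x ++ [a])

/-- An overlap: a word of the form `a ++ x ++ a ++ x ++ a`. -/
def IsOverlap {α : Type*} (w : List α) : Prop :=
  ∃ (a : α) (x : List α), w = a :: (x ++ a :: x ++ [a])

def SqFree {α : Type*} (w : List α) : Prop := ∀ v, v <:+: w → ¬ IsSq v
def CubeFree {α : Type*} (w : List α) : Prop := ∀ v, v <:+: w → ¬ IsCube v
def WeakSqFree {α : Type*} (w : List α) : Prop := ∀ v, v <:+: w → ¬ IsWeakSq v
def OverlapFree {α : Type*} (w : List α) : Prop := ∀ v, v <:+: w → ¬ IsOverlap v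

/-- Applying the morphism determined by letter images `φ` to a finite word. -/
def applyM {α : Type*} (φ : α → List α) (w : List α) : List α := (w.map φ).flatten

def phi : Fin 3 → List (Fin 3) := ![[0,1,1,0], [1,2,2,1], [2,0,0,2]]

/-! The image `applyM phi W` is a concatenation of blocks `a (a+1) (a+1) a`. Inside a block the
first two letters differ and the middle two agree, which rules out cubes of period 1 and 2. A cube
`x x x` with `|x| ≥ 3` has a block start `c (c+1) (c+1)` in its first period, and this pattern
occurs only at block starts; shifting it by `|x|` gives `4 ∣ |x|`, so the cube is aligned with the
blocks, and the first letters of its blocks form a cube of period `|x| / 4` in `W`. -/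

section Uniform

variable {α : Type*} {φ : α → List α} {L : ℕ}

lemma applyM_cons (a : α) (w : List α) : applyM φ (a :: w) = φ a ++ applyM φ w := by
  simp [applyM]

lemma length_applyM (hφ : ∀ a, (φ a).length = L) (w : List α) :
    (applyM φ w).length = L * w.length := by
  simp [applyM, List.length_flatten, Function.comp_def, hφ, mul_comm]

lemma getElem?_applyM (hφ : ∀ a, (φ a).length = L) (w : List α) {k r : ℕ} (hr : r < L) :
    (applyM φ w)[L * k + r]? = w[k]?.bind fun a => (φ a)[r]? := by
  induction w generalizing k with
  | nil => simp [applyM]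
  | cons a w ih =>
    rw [applyM_cons]
    cases k with
    | zero => simp [List.getElem?_append_left, hφ, hr]
    | succ k =>
      rw [List.getElem?_append_right (by rw [hφ, Nat.mul_succ]; omega), hφ,
        show L * (k + 1) + r - L = L * k + r by rw [Nat.mul_succ]; omega, ih]
      simp

end Uniform

def CubeAt {α : Type*} (w : List α) (i p : ℕ) : Prop :=
  0 < p ∧ i + 3 * p ≤ w.length ∧ ∀ j < 2 * p, w[i + j]? = w[i + j + p]?

lemma CubeAt.getElem?_add_period {α : Type*} {w : List α} {i p n : ℕ} (h : CubeAt w i p)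
    (hin : i ≤ n) (hni : n < i + 2 * p) : w[n]? = w[n + p]? := by
  simpa [Nat.add_sub_cancel' hin] using h.2.2 (n - i) (by omega)

lemma take_drop_add_eq_of_getElem? {α : Type*} {w : List α} {i d p : ℕ}
    (h : ∀ j < p, w[i + j + d]? = w[i + j]?) :
    (w.drop (i + d)).take p = (w.drop i).take p := by
  refine List.ext_getElem? fun j => ?_
  simp only [List.getElem?_take, List.getElem?_drop]
  split_ifs with hj
  · rw [← h j hj]; ring_nf
  · rfl

lemma cubeAt_append_cube {α : Type*} (s t : List α) {x : List α} (hx : x ≠ []) :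
    CubeAt (s ++ (x ++ x ++ x) ++ t) s.length x.length := by
  refine ⟨List.length_pos_iff.mpr hx, by simp; omega, fun j hj => ?_⟩
  simp only [List.append_assoc, add_assoc, List.getElem?_append_right (Nat.le_add_right _ _),
    Nat.add_sub_cancel_left]
  rw [List.getElem?_append_right (Nat.le_add_left _ _), Nat.add_sub_cancel]
  simp only [List.getElem?_append]
  split_ifs <;> first | rfl | omega

lemma CubeAt.not_cubeFree {α : Type*} {w : List α} {i p : ℕ} (h : CubeAt w i p) :
    ¬ CubeFree w := by
  obtain ⟨hp, hlen, hper⟩ := h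
  set x := (w.drop i).take p
  have hx : x.length = p := by simp [x]; omega
  have h1 : (w.drop (i + p)).take p = x :=
    take_drop_add_eq_of_getElem? fun j (hj : j < p) => (hper j (by omega)).symm
  have h2 : (w.drop (i + p + p)).take p = x :=
    (take_drop_add_eq_of_getElem? fun j (hj : j < p) => by
      rw [add_assoc i p j]
      exact (hper (p + j) (by omega)).symm).trans h1
  intro hw
  apply hw ((w.drop i).take (3 * p))
    ((List.take_prefix _ _).isInfix.trans (List.drop_suffix _ _).isInfix)
  refine ⟨x, List.ne_nil_of_length_pos (hx ▸ hp), ?_⟩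
  rw [show 3 * p = p + (p + p) by ring, List.take_add, List.take_add, List.drop_drop,
    List.drop_drop, h1, h2, List.append_assoc]

lemma not_cubeFree_iff_exists_cubeAt {α : Type*} {w : List α} :
    ¬ CubeFree w ↔ ∃ i p, CubeAt w i p := by
  refine ⟨fun h => ?_, fun ⟨i, p, h⟩ => h.not_cubeFree⟩
  simp only [CubeFree, not_forall, not_not] at h
  obtain ⟨_, ⟨s, t, rfl⟩, x, hx, rfl⟩ := h
  exact ⟨_, _, cubeAt_append_cube s t hx⟩

lemma phi_apply (a : Fin 3) : phi a = [a, a + 1, a + 1, a] := by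
  fin_cases a <;> rfl

lemma length_phi (a : Fin 3) : (phi a).length = 4 := by
  simp [phi_apply]

lemma length_applyM_phi (W : List (Fin 3)) : (applyM phi W).length = 4 * W.length :=
  length_applyM length_phi W

lemma getElem?_applyM_phi {W : List (Fin 3)} {k : ℕ} {a : Fin 3} (h : W[k]? = some a) :
    (applyM phi W)[4 * k]? = some a ∧ (applyM phi W)[4 * k + 1]? = some (a + 1) ∧
      (applyM phi W)[4 * k + 2]? = some (a + 1) ∧ (applyM phi W)[4 * k + 3]? = some a := by
  have block : ∀ r < 4, (applyM phi W)[4 * k + r]? = (phi a)[r]? := fun r hr => by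
    rw [getElem?_applyM length_phi W hr, h, Option.bind_some]
  exact ⟨by simpa [phi_apply] using block 0, by simpa [phi_apply] using block 1,
    by simpa [phi_apply] using block 2, by simpa [phi_apply] using block 3⟩

lemma getElem?_applyM_phi_four_mul (W : List (Fin 3)) (k : ℕ) :
    (applyM phi W)[4 * k]? = W[k]? := by
  rw [← add_zero (4 * k), getElem?_applyM length_phi W (by norm_num : 0 < 4)]
  cases W[k]? <;> simp [phi_apply]

lemma exists_getElem?_of_four_mul_lt {W : List (Fin 3)} {k : ℕ}
    (hk : 4 * k < (applyM phi W).length) : ∃ a, W[k]? = some a :=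
  ⟨_, List.getElem?_eq_getElem (by rw [length_applyM_phi] at hk; omega)⟩

lemma getElem?_applyM_phi_ne_succ {W : List (Fin 3)} {n : ℕ} (hn : n % 4 = 0 ∨ n % 4 = 2)
    (hlen : n < (applyM phi W).length) :
    (applyM phi W)[n]? ≠ (applyM phi W)[n + 1]? := by
  obtain ⟨a, ha⟩ := exists_getElem?_of_four_mul_lt (W := W) (k := n / 4) (by omega)
  obtain ⟨h0, h1, h2, h3⟩ := getElem?_applyM_phi ha
  rcases hn with hn | hn
  · rw [show n = 4 * (n / 4) by omega, h0, h1]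
    simp
  · rw [show n = 4 * (n / 4) + 2 by omega, add_assoc, h2, h3]
    simp

lemma mod_four_eq_zero_of_getElem?_applyM_phi {W : List (Fin 3)} {n : ℕ} {c : Fin 3}
    (h0 : (applyM phi W)[n]? = some c) (h1 : (applyM phi W)[n + 1]? = some (c + 1))
    (h2 : (applyM phi W)[n + 2]? = some (c + 1)) : n % 4 = 0 := by
  have hlen : n + 2 < (applyM phi W).length := by
    by_contra! hge
    simp [List.getElem?_eq_none hge] at h2
  obtain ⟨a, ha⟩ := exists_getElem?_of_four_mul_lt (W := W) (k := n / 4) (by omega)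
  obtain ⟨b, hb⟩ := exists_getElem?_of_four_mul_lt (W := W) (k := (n + 2) / 4) (by omega)
  obtain ⟨-, ha1, ha2, ha3⟩ := getElem?_applyM_phi ha
  obtain ⟨hb0, hb1, -, -⟩ := getElem?_applyM_phi hb
  have : n % 4 = 0 ∨ n % 4 = 1 ∨ n % 4 = 2 ∨ n % 4 = 3 := by omega
  rcases this with h | h | h | h
  · exact h
  · rw [show n = 4 * (n / 4) + 1 by omega, ha1] at h0
    rw [show n + 1 = 4 * (n / 4) + 2 by omega, ha2] at h1
    grind
  · rw [show n = 4 * (n / 4) + 2 by omega, ha2] at h0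
    rw [show n + 1 = 4 * (n / 4) + 3 by omega, ha3] at h1
    grind
  · rw [show n + 1 = 4 * ((n + 2) / 4) by omega, hb0] at h1
    rw [show n + 2 = 4 * ((n + 2) / 4) + 1 by omega, hb1] at h2
    grind

lemma not_cubeAt_applyM_phi_one (W : List (Fin 3)) (i : ℕ) : ¬ CubeAt (applyM phi W) i 1 := by
  intro h
  obtain ⟨n, hin, hni, hmod⟩ : ∃ n, i ≤ n ∧ n < i + 2 ∧ (n % 4 = 0 ∨ n % 4 = 2) := by
    rcases Nat.mod_two_eq_zero_or_one i with h | h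
    · exact ⟨i, by omega, by omega, by omega⟩
    · exact ⟨i + 1, by omega, by omega, by omega⟩
  exact getElem?_applyM_phi_ne_succ hmod (by have := h.2.1; omega) (h.getElem?_add_period hin hni)

lemma not_cubeAt_applyM_phi_two (W : List (Fin 3)) (i : ℕ) : ¬ CubeAt (applyM phi W) i 2 := by
  intro h
  have hlen := h.2.1
  -- `4 * k` is the first block start at or after `i`
  set k := (i + 3) / 4
  obtain ⟨a, ha⟩ := exists_getElem?_of_four_mul_lt (W := W) (k := k) (by omega)
  obtain ⟨-, h1, h2, -⟩ := getElem?_applyM_phi ha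
  apply getElem?_applyM_phi_ne_succ (W := W) (n := 4 * k) (Or.inl (by omega)) (by omega)
  rw [h.getElem?_add_period (n := 4 * k) (by omega) (by omega), h1, h2]

lemma four_dvd_of_cubeAt_applyM_phi {W : List (Fin 3)} {i p : ℕ}
    (h : CubeAt (applyM phi W) i p) (hp : 3 ≤ p) : 4 ∣ p := by
  have hlen := h.2.1
  set k := (i + 3) / 4
  obtain ⟨a, ha⟩ := exists_getElem?_of_four_mul_lt (W := W) (k := k) (by omega)
  obtain ⟨h0, h1, h2, -⟩ := getElem?_applyM_phi ha
  have shift : ∀ r < 3, (applyM phi W)[4 * k + r]? = (applyM phi W)[4 * k + r + p]? :=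
    fun r hr => h.getElem?_add_period (by omega) (by omega)
  have := mod_four_eq_zero_of_getElem?_applyM_phi (n := 4 * k + p) (c := a)
    (by rw [← h0, ← add_zero (4 * k), shift 0 (by norm_num)])
    (by rw [← h1, shift 1 (by norm_num)]; ring_nf)
    (by rw [← h2, shift 2 (by norm_num)]; ring_nf)
  omega

lemma cubeAt_of_cubeAt_applyM_phi {W : List (Fin 3)} {i q : ℕ}
    (h : CubeAt (applyM phi W) i (4 * q)) : CubeAt W ((i + 3) / 4) q := by
  have hq := h.1
  have hlen := h.2.1
  rw [length_applyM_phi] at hlen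
  refine ⟨by omega, by omega, fun j hj => ?_⟩
  rw [← getElem?_applyM_phi_four_mul W, ← getElem?_applyM_phi_four_mul W, mul_add _ _ q]
  exact h.getElem?_add_period (by omega) (by omega)

lemma exists_cubeAt_of_cubeAt_applyM_phi {W : List (Fin 3)} {i p : ℕ}
    (h : CubeAt (applyM phi W) i p) : ∃ i' p', CubeAt W i' p' := by
  obtain rfl | rfl | hp : p = 1 ∨ p = 2 ∨ 3 ≤ p := by have := h.1; omega
  · exact absurd h (not_cubeAt_applyM_phi_one W i)
  · exact absurd h (not_cubeAt_applyM_phi_two W i)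
  · obtain ⟨q, rfl⟩ := four_dvd_of_cubeAt_applyM_phi h hp
    exact ⟨_, _, cubeAt_of_cubeAt_applyM_phi h⟩

theorem stmt5 : ∀ W : List (Fin 3), CubeFree W → CubeFree (applyM phi W) := by
  intro W hW
  by_contra hφW
  obtain ⟨i, p, hcube⟩ := not_cubeFree_iff_exists_cubeAt.mp hφW
  exact not_cubeFree_iff_exists_cubeAt.mpr (exists_cubeAt_of_cubeAt_applyM_phi hcube) hW
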